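/- Let α be a graphic degree sequence of length n. If the edge {i,j} (with i ≠ j) is forced for α, then for all indices p, q with 1 ≤ p ≤ i, 1 ≤ q ≤ j and p ≠ q, the edge {p,q} is also forced for α. -/

import Mathlib

/-!
A 2-switch, trading edges `ad, bc` for the non-edges `ac, bd`, preserves every degree. If `{u, v}`
is missing from a realization and `α u' ≤ α u`, then either `{u', v}` is missing too, or
counting neighbours gives some `w ~ u` with `w ≁ u'`, `w ≠ u'`, and the 2-switch on `uw, u'v`
yields a realization missing `{u', v}`. So a forced edge stays forced when one endpoint is
replaced by a vertex of at least the same degree; doing this once in each coordinate moves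
`{i, j}` to `{p, q}`.
-/

/-- `G` is a (labeled) realization of the degree sequence `α` if the degree of
vertex `v` in `G` equals `α v` for every `v`. -/
def IsRealization {n : ℕ} (α : Fin n → ℕ) (G : SimpleGraph (Fin n)) : Prop :=
  ∀ v : Fin n, (G.neighborSet v).ncard = α v

/-- A sequence is graphic if it has a realization. -/
def Graphic {n : ℕ} (α : Fin n → ℕ) : Prop :=
  ∃ G : SimpleGraph (Fin n), IsRealization α G

/-- The edge `{i,j}` is forced for `α` if it lies in every realization of `α`. -/
def ForcedEdge {n : ℕ} (α : Fin n → ℕ) (i j : Fin n) : Prop :=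
  ∀ G : SimpleGraph (Fin n), IsRealization α G → G.Adj i j

/-- The edge `{i,j}` is forbidden for `α` if it lies in no realization of `α`. -/
def ForbiddenEdge {n : ℕ} (α : Fin n → ℕ) (i j : Fin n) : Prop :=
  ∀ G : SimpleGraph (Fin n), IsRealization α G → ¬ G.Adj i j

/-- `α` majorizes `β`: every partial sum of `α` is at least the corresponding
partial sum of `β`, and the total sums agree. -/
def Majorizes {n : ℕ} (α β : Fin n → ℕ) : Prop :=
  (∀ k : ℕ, k ≤ n →
    ∑ i ∈ Finset.univ.filter (fun i : Fin n => (i : ℕ) < k), β i ≤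
    ∑ i ∈ Finset.univ.filter (fun i : Fin n => (i : ℕ) < k), α i) ∧
  ∑ i, α i = ∑ i, β i

namespace SimpleGraph

variable {V : Type*} {G : SimpleGraph V}

def twoSwitch (G : SimpleGraph V) (a b c d : V) : SimpleGraph V :=
  G.deleteEdges {s(a, d), s(b, c)} ⊔ edge a c ⊔ edge b d

section TwoSwitch

variable {a b c d : V}

theorem exists_perm_neighborSet_twoSwitch [DecidableEq V] (hac : a ≠ c) (hbd : b ≠ d)
    (had : G.Adj a d) (hbc : G.Adj b c) (hnac : ¬G.Adj a c) (hnbd : ¬G.Adj b d) (x : V) :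
    ∃ σ : Equiv.Perm V, (G.twoSwitch a b c d).neighborSet x = σ '' G.neighborSet x := by
  have hab : a ≠ b := by rintro rfl; exact hnac hbc
  have hcd : c ≠ d := by rintro rfl; exact hnac had
  refine ⟨if x = a ∨ x = b then Equiv.swap c d else if x = c ∨ x = d then Equiv.swap a b
    else Equiv.refl V, ?_⟩
  ext y
  rw [Equiv.image_eq_preimage_symm]
  simp only [twoSwitch, mem_neighborSet, sup_adj, edge_adj, deleteEdges_adj, Set.mem_insert_iff,
    Set.mem_singleton_iff, Set.mem_preimage, Sym2.eq_iff]
  split_ifs <;>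
    simp only [Equiv.symm_swap, Equiv.swap_apply_def, Equiv.refl_symm, Equiv.refl_apply] <;>
    (try split_ifs) <;> grind [G.adj_symm, had.ne, hbc.ne]

theorem ncard_neighborSet_twoSwitch (hac : a ≠ c) (hbd : b ≠ d) (had : G.Adj a d)
    (hbc : G.Adj b c) (hnac : ¬G.Adj a c) (hnbd : ¬G.Adj b d) (x : V) :
    ((G.twoSwitch a b c d).neighborSet x).ncard = (G.neighborSet x).ncard := by
  classical
  obtain ⟨σ, hσ⟩ := exists_perm_neighborSet_twoSwitch hac hbd had hbc hnac hnbd x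
  rw [hσ, Set.ncard_image_of_injective _ σ.injective]

theorem not_adj_twoSwitch (hab : a ≠ b) (hcd : c ≠ d) : ¬(G.twoSwitch a b c d).Adj b c := by
  simp only [twoSwitch, sup_adj, edge_adj, deleteEdges_adj, Set.mem_insert_iff,
    Set.mem_singleton_iff, Sym2.eq_iff]
  grind

end TwoSwitch

variable [Finite V] {u u' v : V}

theorem exists_adj_not_adj_of_ncard_neighborSet_le (hu'v : G.Adj u' v) (huv : u ≠ v)
    (hnadj : ¬G.Adj u v) (hdeg : (G.neighborSet u').ncard ≤ (G.neighborSet u).ncard) :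
    ∃ w, G.Adj u w ∧ w ≠ u' ∧ ¬G.Adj u' w := by
  by_contra! h
  have hle : (G.neighborSet u' \ {u}).ncard ≤ (G.neighborSet u \ {u'}).ncard := by
    by_cases hadj : G.Adj u u'
    · rw [Set.ncard_sdiff_singleton_of_mem (G.mem_neighborSet _ _ |>.mpr hadj.symm),
        Set.ncard_sdiff_singleton_of_mem (G.mem_neighborSet _ _ |>.mpr hadj)]
      omega
    · rw [Set.sdiff_singleton_eq_self (show u ∉ G.neighborSet u' from mt G.adj_symm hadj),
        Set.sdiff_singleton_eq_self (show u' ∉ G.neighborSet u from hadj)]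
      exact hdeg
  have hsub : G.neighborSet u \ {u'} ⊆ G.neighborSet u' \ {u} :=
    fun w hw => ⟨h w hw.1 hw.2, hw.1.ne.symm⟩
  have hssub :=
    (Set.ssubset_iff_of_subset hsub).mpr ⟨v, ⟨hu'v, huv.symm⟩, fun hv => hnadj hv.1⟩
  exact (Set.ncard_lt_ncard hssub).not_ge hle

theorem exists_degree_preserving_not_adj (huv : u ≠ v) (hnadj : ¬G.Adj u v)
    (hdeg : (G.neighborSet u').ncard ≤ (G.neighborSet u).ncard) :
    ∃ G' : SimpleGraph V,
      (∀ x, (G'.neighborSet x).ncard = (G.neighborSet x).ncard) ∧ ¬G'.Adj u' v := by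
  by_cases hu'v : G.Adj u' v
  · obtain ⟨w, huw, hwu', hnu'w⟩ :=
      exists_adj_not_adj_of_ncard_neighborSet_le hu'v huv hnadj hdeg
    have huu' : u ≠ u' := by rintro rfl; exact hnadj hu'v
    have hvw : v ≠ w := by rintro rfl; exact hnadj huw
    exact ⟨G.twoSwitch u u' v w, ncard_neighborSet_twoSwitch huv hwu'.symm huw hu'v hnadj hnu'w,
      not_adj_twoSwitch huu' hvw⟩
  · exact ⟨G, fun _ => rfl, hu'v⟩

end SimpleGraph

theorem ForcedEdge.symm {n : ℕ} {α : Fin n → ℕ} {u v : Fin n} (hf : ForcedEdge α u v) :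
    ForcedEdge α v u :=
  fun G hG => (hf G hG).symm

theorem ForcedEdge.of_apply_le {n : ℕ} {α : Fin n → ℕ} {u u' v : Fin n}
    (hf : ForcedEdge α u' v) (hle : α u' ≤ α u) (huv : u ≠ v) : ForcedEdge α u v := by
  intro G hG
  by_contra hnadj
  obtain ⟨G', hdeg, hnadj'⟩ :=
    SimpleGraph.exists_degree_preserving_not_adj (u' := u') huv hnadj (by rwa [hG u, hG u'])
  exact hnadj' (hf G' fun x => (hdeg x).trans (hG x))

theorem forced_edges_upward_closed_general {n : ℕ} (α : Fin n → ℕ)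
    (hα : Antitone α)
    (i j : Fin n) (hf : ForcedEdge α i j) :
    ∀ p q : Fin n, p ≤ i → q ≤ j → p ≠ q → ForcedEdge α p q := by
  intro p q hpi hqj hpq
  obtain rfl | hiq := eq_or_ne i q
  · exact hf.symm.of_apply_le (hα (hpi.trans hqj)) hpq
  · exact (hf.symm.of_apply_le (hα hqj) hiq.symm).symm.of_apply_le (hα hpi) hpq

/-- if the edge `{i,j}` is forced for the graphic nonincreasing
degree sequence `α`, then for all indices `p ≤ i` and `q ≤ j` with `p ≠ q`, the
edge `{p,q}` is also forced for `α`. -/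
theorem forced_edges_upward_closed {n : ℕ} (α : Fin n → ℕ)
    (hα : Antitone α) (hb : ∀ v, α v ≤ n - 1) (hg : Graphic α)
    (i j : Fin n) (hij : i ≠ j) (hf : ForcedEdge α i j) :
    ∀ p q : Fin n, p ≤ i → q ≤ j → p ≠ q → ForcedEdge α p q :=
  forced_edges_upward_closed_general α hα i j hf
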